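/- arXiv:0903.2821 — 5 statements merged into one kernel-verified Lean document; each statement's English description precedes it below -/
import Mathlib

section
/- Let φ be a nondecreasing real-valued function on an interval I and f : I → ℝ nondecreasing with |f(u) - f(v)| ≤ c(φ(v) - φ(u)) for u < v in I. Then f factors as f = g ∘ φ where g : ℝ → ℝ is both Lipschitz continuous (with constant c) and nondecreasing. -/
/-!
Put `g y = inf_{z ∈ I} (f z + c (y - φ z)⁺)`. Each function inside the infimum is nondecreasing and
`c`-Lipschitz in `y`, hence so is `g`, and `g (φ x) = f x` because the hypotheses give exactly
`f x ≤ f z + c (φ x - φ z)⁺` for all `x, z ∈ I`, with equality at `z = x`.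
-/

open Set

theorem posPart_add_le {α : Type*} [AddCommGroup α] [LinearOrder α] [IsOrderedAddMonoid α]
    (a b : α) : (a + b)⁺ ≤ a⁺ + b⁺ :=
  sup_le (add_le_add (le_posPart a) (le_posPart b))
    (add_nonneg (posPart_nonneg a) (posPart_nonneg b))

section MonotoneMcShane

variable {α : Type*} (s : Set α) (p v : α → ℝ) (K : ℝ)

noncomputable def monotoneMcShane (y : ℝ) : ℝ :=
  sInf ((fun z => v z + K * (y - p z)⁺) '' s)

variable {s p v K}

theorem bddBelow_monotoneMcShane_image (hK : 0 ≤ K)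
    (hdom : ∀ x ∈ s, ∀ z ∈ s, v x ≤ v z + K * (p x - p z)⁺) (hs : s.Nonempty) (y : ℝ) :
    BddBelow ((fun z => v z + K * (y - p z)⁺) '' s) := by
  obtain ⟨x₀, hx₀⟩ := hs
  refine ⟨v x₀ - K * (p x₀ - y)⁺, forall_mem_image.2 fun z hz => ?_⟩
  have hsplit : (p x₀ - p z)⁺ ≤ (y - p z)⁺ + (p x₀ - y)⁺ := by
    simpa using posPart_add_le (y - p z) (p x₀ - y)
  linarith [hdom x₀ hx₀ z hz, mul_le_mul_of_nonneg_left hsplit hK]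

theorem monotoneMcShane_le (hbdd : ∀ y, BddBelow ((fun z => v z + K * (y - p z)⁺) '' s))
    {z : α} (hz : z ∈ s) (y : ℝ) : monotoneMcShane s p v K y ≤ v z + K * (y - p z)⁺ :=
  csInf_le (hbdd y) (mem_image_of_mem _ hz)

theorem le_monotoneMcShane (hs : s.Nonempty) {b y : ℝ}
    (h : ∀ z ∈ s, b ≤ v z + K * (y - p z)⁺) : b ≤ monotoneMcShane s p v K y :=
  le_csInf (hs.image _) (forall_mem_image.2 h)

theorem monotone_monotoneMcShane (hK : 0 ≤ K) (hs : s.Nonempty)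
    (hbdd : ∀ y, BddBelow ((fun z => v z + K * (y - p z)⁺) '' s)) :
    Monotone (monotoneMcShane s p v K) := fun a b hab =>
  le_monotoneMcShane hs fun z hz =>
    (monotoneMcShane_le hbdd hz a).trans <| by
      gcongr
      exact posPart_mono (by linarith)

theorem monotoneMcShane_le_add_mul (hK : 0 ≤ K) (hs : s.Nonempty)
    (hbdd : ∀ y, BddBelow ((fun z => v z + K * (y - p z)⁺) '' s)) {a b : ℝ} (hab : a ≤ b) :
    monotoneMcShane s p v K b ≤ monotoneMcShane s p v K a + K * (b - a) := by
  suffices monotoneMcShane s p v K b - K * (b - a) ≤ monotoneMcShane s p v K a by linarith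
  refine le_monotoneMcShane hs fun z hz => ?_
  have hsplit : (b - p z)⁺ ≤ (a - p z)⁺ + (b - a) := by
    simpa [posPart_eq_self.2 (sub_nonneg.2 hab)] using posPart_add_le (a - p z) (b - a)
  linarith [monotoneMcShane_le hbdd hz b, mul_le_mul_of_nonneg_left hsplit hK]

theorem lipschitzWith_monotoneMcShane (hK : 0 ≤ K) (hs : s.Nonempty)
    (hbdd : ∀ y, BddBelow ((fun z => v z + K * (y - p z)⁺) '' s)) :
    LipschitzWith K.toNNReal (monotoneMcShane s p v K) := by
  refine LipschitzWith.of_le_add_mul' K fun a b => ?_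
  have hdist : 0 ≤ K * dist a b := mul_nonneg hK dist_nonneg
  rcases le_total b a with hba | hab
  · calc monotoneMcShane s p v K a ≤ monotoneMcShane s p v K b + K * (a - b) :=
          monotoneMcShane_le_add_mul hK hs hbdd hba
      _ ≤ _ := by rw [Real.dist_eq, abs_of_nonneg (sub_nonneg.2 hba)]
  · linarith [monotone_monotoneMcShane hK hs hbdd hab]

theorem monotoneMcShane_apply_eq (hdom : ∀ x ∈ s, ∀ z ∈ s, v x ≤ v z + K * (p x - p z)⁺)
    (hbdd : ∀ y, BddBelow ((fun z => v z + K * (y - p z)⁺) '' s)) {x : α} (hx : x ∈ s) :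
    monotoneMcShane s p v K (p x) = v x :=
  le_antisymm (by simpa using monotoneMcShane_le hbdd hx (p x))
    (le_monotoneMcShane ⟨x, hx⟩ (hdom x hx))

theorem exists_monotone_lipschitzWith_comp_eq (hK : 0 ≤ K)
    (hdom : ∀ x ∈ s, ∀ z ∈ s, v x ≤ v z + K * (p x - p z)⁺) :
    ∃ g : ℝ → ℝ, LipschitzWith K.toNNReal g ∧ Monotone g ∧ ∀ x ∈ s, g (p x) = v x := by
  rcases s.eq_empty_or_nonempty with rfl | hs
  · exact ⟨fun _ => 0, LipschitzWith.const' 0, monotone_const, by simp⟩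
  have hbdd := bddBelow_monotoneMcShane_image hK hdom hs
  exact ⟨_, lipschitzWith_monotoneMcShane hK hs hbdd, monotone_monotoneMcShane hK hs hbdd,
    fun x hx => monotoneMcShane_apply_eq hdom hbdd hx⟩

end MonotoneMcShane

theorem lipschitz_monotone_factorization_general
    (I : Set ℝ)
    (φ f : ℝ → ℝ) (c : ℝ) (hc : 0 < c)
    (hfmono : ∀ u ∈ I, ∀ v ∈ I, u ≤ v → f u ≤ f v)
    (hf : ∀ u ∈ I, ∀ v ∈ I, u ≤ v → |f u - f v| ≤ c * (φ v - φ u)) :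
    ∃ g : ℝ → ℝ, LipschitzWith (Real.toNNReal c) g ∧ Monotone g ∧
      (∀ x ∈ I, f x = g (φ x)) := by
  have hdom : ∀ x ∈ I, ∀ z ∈ I, f x ≤ f z + c * (φ x - φ z)⁺ := by
    intro x hx z hz
    rcases le_total z x with hzx | hxz
    · have hzx' := hf z hz x hx hzx
      rw [abs_sub_comm] at hzx'
      linarith [le_abs_self (f x - f z), mul_le_mul_of_nonneg_left (le_posPart (φ x - φ z)) hc.le]
    · linarith [hfmono x hx z hz hxz, mul_nonneg hc.le (posPart_nonneg (φ x - φ z))]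
  obtain ⟨g, hg, hmono, hgf⟩ := exists_monotone_lipschitzWith_comp_eq hc.le hdom
  exact ⟨g, hg, hmono, fun x hx => (hgf x hx).symm⟩

theorem lipschitz_monotone_factorization
    (I : Set ℝ) (hI : I.OrdConnected)
    (φ f : ℝ → ℝ) (c : ℝ) (hc : 0 < c)
    (hφ : ∀ u ∈ I, ∀ v ∈ I, u ≤ v → φ u ≤ φ v)
    (hfmono : ∀ u ∈ I, ∀ v ∈ I, u ≤ v → f u ≤ f v)
    (hf : ∀ u ∈ I, ∀ v ∈ I, u ≤ v → |f u - f v| ≤ c * (φ v - φ u)) :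
    ∃ g : ℝ → ℝ, LipschitzWith (Real.toNNReal c) g ∧ Monotone g ∧
      (∀ x ∈ I, f x = g (φ x)) :=
  lipschitz_monotone_factorization_general I φ f c hc hfmono hf
end

section
/- Let Ψ : ℝ≥0 × ℝ≥0 → ℝ be bounded, supermodular, and vanishing on hyperplanes. Then there exist bounded nondecreasing functions φ₁, φ₂ : ℝ≥0 → ℝ≥0 with φ₁(0) = φ₂(0) = 0, and a Lipschitz continuous function Ψ̃ on ℝ≥0 × ℝ≥0, such that Ψ(u,v) = Ψ̃(φ₁(u), φ₂(v)) for all u, v ≥ 0. -/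
/-!
Take `φ₁ u = sup_v Ψ(u, v)` and `φ₂ v = sup_u Ψ(u, v)`. Supermodularity says that for `u ≤ u'`
the increment `Ψ(u', v) - Ψ(u, v)` is nondecreasing in `v`, and so bounded by
`φ₁ u' - φ₁ u`; symmetrically in `v`. Hence
`|Ψ(u, v) - Ψ(u', v')| ≤ |φ₁ u - φ₁ u'| + |φ₂ v - φ₂ v'|`, i.e. `Ψ` is a Lipschitz function of
`(φ₁ u, φ₂ v)` on the image of the quadrant, and McShane's extension gives `Ψ̃`.
-/

open Set Function

theorem exists_lipschitzWith_eqOn_comp {α β : Type*} [PseudoMetricSpace β] {s : Set α}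
    {F : α → ℝ} {g : α → β} {K : NNReal}
    (h : ∀ a ∈ s, ∀ b ∈ s, |F a - F b| ≤ K * dist (g a) (g b)) :
    ∃ G : β → ℝ, LipschitzWith K G ∧ EqOn F (G ∘ g) s := by
  have hfac : (fun a : s => F a).FactorsThrough (fun a : s => g a) := fun a b hab => by
    have hab' := h a a.2 b b.2
    dsimp only at hab ⊢
    rw [hab, dist_self, mul_zero] at hab'
    exact sub_eq_zero.1 (abs_nonpos_iff.1 hab')
  set f := extend (fun a : s => g a) (fun a : s => F a) 0
  have hextend : ∀ a ∈ s, f (g a) = F a := fun a ha => hfac.extend_apply 0 ⟨a, ha⟩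
  have hlip : LipschitzOnWith K f (g '' s) := by
    rw [lipschitzOnWith_iff_dist_le_mul]
    rintro _ ⟨a, ha, rfl⟩ _ ⟨b, hb, rfl⟩
    rw [hextend a ha, hextend b hb, Real.dist_eq]
    exact h a ha b hb
  obtain ⟨G, hG, hEq⟩ := hlip.extend_real
  exact ⟨G, hG, fun a ha => (hextend a ha).symm.trans (hEq (mem_image_of_mem g ha))⟩

theorem Prod.abs_sub_add_abs_sub_le_two_mul_dist (a b a' b' : ℝ) :
    |a - a'| + |b - b'| ≤ 2 * dist (a, b) (a', b') := by
  rw [two_mul, ← Real.dist_eq, ← Real.dist_eq, Prod.dist_eq]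
  exact add_le_add (le_max_left _ _) (le_max_right _ _)

def SupermodularOnQuadrant (Ψ : ℝ → ℝ → ℝ) : Prop :=
  ∀ a b c d : ℝ, 0 ≤ a → a ≤ b → 0 ≤ c → c ≤ d → Ψ a d + Ψ b c ≤ Ψ b d + Ψ a c

def VanishesOnAxes (Ψ : ℝ → ℝ → ℝ) : Prop :=
  ∀ s : ℝ, 0 ≤ s → Ψ s 0 = 0 ∧ Ψ 0 s = 0

theorem VanishesOnAxes.swap {Ψ : ℝ → ℝ → ℝ} (hvan : VanishesOnAxes Ψ) :
    VanishesOnAxes (swap Ψ) :=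
  fun s hs => (hvan s hs).symm

noncomputable def rowSup (Ψ : ℝ → ℝ → ℝ) (u : ℝ) : ℝ :=
  sSup (Ψ u '' Ici 0)

theorem rowSup_le {Ψ : ℝ → ℝ → ℝ} {M : ℝ} (hM : ∀ u v, 0 ≤ u → 0 ≤ v → Ψ u v ≤ M) {u : ℝ}
    (hu : 0 ≤ u) : rowSup Ψ u ≤ M :=
  csSup_le (nonempty_Ici.image _) (forall_mem_image.2 fun v hv => hM u v hu hv)

theorem VanishesOnAxes.rowSup_zero {Ψ : ℝ → ℝ → ℝ} (hvan : VanishesOnAxes Ψ) :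
    rowSup Ψ 0 = 0 := by
  rw [rowSup, EqOn.image_eq (s := Ici 0) (f₂ := fun _ => 0) fun s hs => (hvan s hs).2,
    nonempty_Ici.image_const, csSup_singleton]

namespace SupermodularOnQuadrant

variable {Ψ : ℝ → ℝ → ℝ} (hsup : SupermodularOnQuadrant Ψ) (hvan : VanishesOnAxes Ψ)
  {M : ℝ} (hM : ∀ u v, 0 ≤ u → 0 ≤ v → Ψ u v ≤ M)
include hsup

theorem swap : SupermodularOnQuadrant (swap Ψ) := fun a b c d ha hab hc hcd => by
  have := hsup c d a b hc hcd ha hab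
  simp only [Function.swap]
  linarith

include hvan

theorem monotoneOn_right {u : ℝ} (hu : 0 ≤ u) : MonotoneOn (Ψ u) (Ici 0) :=
  fun c hc d _ hcd => by
  have := hsup 0 u c d le_rfl hu hc hcd
  linarith [(hvan c hc).2, (hvan d (le_trans hc hcd)).2]

theorem monotoneOn_left {v : ℝ} (hv : 0 ≤ v) : MonotoneOn (fun u => Ψ u v) (Ici 0) :=
  hsup.swap.monotoneOn_right hvan.swap hv

include hM

theorem sub_le_rowSup_sub {u u' v : ℝ} (hu : 0 ≤ u) (huu' : u ≤ u') (hv : 0 ≤ v) :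
    Ψ u' v - Ψ u v ≤ rowSup Ψ u' - rowSup Ψ u := by
  suffices rowSup Ψ u ≤ rowSup Ψ u' - (Ψ u' v - Ψ u v) by linarith
  refine csSup_le (nonempty_Ici.image _) (forall_mem_image.2 fun w hw => ?_)
  -- supermodularity compares the increments at heights `v ≤ max v w`
  have hincr := hsup u u' v (max v w) hu huu' hv (le_max_left v w)
  have hrow : Ψ u' (max v w) ≤ rowSup Ψ u' :=
    le_csSup ⟨M, forall_mem_image.2 fun z hz => hM u' z (hu.trans huu') hz⟩
      (mem_image_of_mem _ (hv.trans (le_max_left v w)))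
  have hmono : Ψ u w ≤ Ψ u (max v w) :=
    hsup.monotoneOn_right hvan hu hw (hv.trans (le_max_left v w)) (le_max_right v w)
  linarith

theorem monotoneOn_rowSup : MonotoneOn (rowSup Ψ) (Ici 0) := fun u hu u' _ huu' => by
  have := hsup.sub_le_rowSup_sub hvan hM hu huu' le_rfl
  rw [(hvan u hu).1, (hvan u' (le_trans hu huu')).1] at this
  linarith

theorem abs_sub_le_abs_rowSup_sub {u u' v : ℝ} (hu : 0 ≤ u) (hu' : 0 ≤ u') (hv : 0 ≤ v) :
    |Ψ u v - Ψ u' v| ≤ |rowSup Ψ u - rowSup Ψ u'| := by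
  wlog huu' : u ≤ u' generalizing u u'
  · rw [abs_sub_comm, abs_sub_comm (rowSup Ψ u)]
    exact this hu' hu (le_of_not_ge huu')
  rw [abs_sub_comm, abs_of_nonneg (sub_nonneg.2 (hsup.monotoneOn_left hvan hv hu hu' huu')),
    abs_sub_comm, abs_of_nonneg (sub_nonneg.2 (hsup.monotoneOn_rowSup hvan hM hu hu' huu'))]
  exact hsup.sub_le_rowSup_sub hvan hM hu huu' hv

theorem abs_sub_le_abs_rowSup_sub_add {u u' v v' : ℝ} (hu : 0 ≤ u) (hu' : 0 ≤ u') (hv : 0 ≤ v)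
    (hv' : 0 ≤ v') :
    |Ψ u v - Ψ u' v'| ≤
      |rowSup Ψ u - rowSup Ψ u'| + |rowSup (Function.swap Ψ) v - rowSup (Function.swap Ψ) v'| :=
  calc |Ψ u v - Ψ u' v'| ≤ |Ψ u v - Ψ u' v| + |Ψ u' v - Ψ u' v'| := _root_.abs_sub_le _ _ _
    _ ≤ _ := add_le_add (hsup.abs_sub_le_abs_rowSup_sub hvan hM hu hu' hv)
        (hsup.swap.abs_sub_le_abs_rowSup_sub hvan.swap (fun v u hv hu => hM u v hu hv) hv hv' hu')

end SupermodularOnQuadrant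

theorem bounded_supermodular_decomposition
    (Ψ : ℝ → ℝ → ℝ)
    (hbdd : ∃ M : ℝ, ∀ u v : ℝ, 0 ≤ u → 0 ≤ v → |Ψ u v| ≤ M)
    (hsup : ∀ a b c d : ℝ, 0 ≤ a → a ≤ b → 0 ≤ c → c ≤ d →
      Ψ a d + Ψ b c ≤ Ψ b d + Ψ a c)
    (hvan : ∀ s : ℝ, 0 ≤ s → Ψ s 0 = 0 ∧ Ψ 0 s = 0) :
    ∃ (φ₁ φ₂ : ℝ → ℝ) (Ψt : ℝ → ℝ → ℝ) (K : NNReal),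
      (∀ u : ℝ, 0 ≤ u → 0 ≤ φ₁ u) ∧ (∀ u : ℝ, 0 ≤ u → 0 ≤ φ₂ u) ∧
      (∃ M₁ : ℝ, ∀ u : ℝ, 0 ≤ u → φ₁ u ≤ M₁) ∧
      (∃ M₂ : ℝ, ∀ u : ℝ, 0 ≤ u → φ₂ u ≤ M₂) ∧
      (∀ u v : ℝ, 0 ≤ u → u ≤ v → φ₁ u ≤ φ₁ v) ∧
      (∀ u v : ℝ, 0 ≤ u → u ≤ v → φ₂ u ≤ φ₂ v) ∧
      φ₁ 0 = 0 ∧ φ₂ 0 = 0 ∧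
      LipschitzOnWith K (fun p : ℝ × ℝ => Ψt p.1 p.2) (Set.Ici 0 ×ˢ Set.Ici 0) ∧
      (∀ u v : ℝ, 0 ≤ u → 0 ≤ v → Ψ u v = Ψt (φ₁ u) (φ₂ v)) := by
  obtain ⟨M, hM⟩ := hbdd
  have hle : ∀ u v, 0 ≤ u → 0 ≤ v → Ψ u v ≤ M := fun u v hu hv => (abs_le.1 (hM u v hu hv)).2
  have hle' : ∀ v u, 0 ≤ v → 0 ≤ u → swap Ψ v u ≤ M := fun v u hv hu => hle u v hu hv
  have hsup' : SupermodularOnQuadrant Ψ := hsup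
  have hvan' : VanishesOnAxes Ψ := hvan
  have hmono₁ := hsup'.monotoneOn_rowSup hvan' hle
  have hmono₂ := hsup'.swap.monotoneOn_rowSup hvan'.swap hle'
  obtain ⟨G, hG, hΨG⟩ := exists_lipschitzWith_eqOn_comp (s := Ici 0 ×ˢ Ici 0) (F := uncurry Ψ)
    (g := Prod.map (rowSup Ψ) (rowSup (swap Ψ))) (K := 2) fun p hp q hq =>
      (hsup'.abs_sub_le_abs_rowSup_sub_add hvan' hle hp.1 hq.1 hp.2 hq.2).trans
        (by rw [NNReal.coe_ofNat]; exact Prod.abs_sub_add_abs_sub_le_two_mul_dist ..)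
  refine ⟨rowSup Ψ, rowSup (swap Ψ), fun x y => G (x, y), 2,
    fun u hu => hvan'.rowSup_zero ▸ hmono₁ self_mem_Ici hu hu,
    fun v hv => hvan'.swap.rowSup_zero ▸ hmono₂ self_mem_Ici hv hv,
    ⟨M, fun u => rowSup_le hle⟩, ⟨M, fun v => rowSup_le hle'⟩,
    fun u v hu huv => hmono₁ hu (hu.trans huv) huv,
    fun u v hu huv => hmono₂ hu (hu.trans huv) huv,
    hvan'.rowSup_zero, hvan'.swap.rowSup_zero, hG.lipschitzOnWith,
    fun u v hu hv => hΨG (mk_mem_prod hu hv)⟩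
end

section
/- Let j : [0,∞) → ℝ be nonnegative and nonincreasing, and let h : ℝⁿ → [0,∞) be a Schwarz symmetric (radial, radially nonincreasing) integrable function. Then the convolution ν(x) = ∫_{ℝⁿ} j(|x−y|) h(y) dy is radial and radially nonincreasing, i.e. ν = ν* up to a.e. equality. -/
/-!
Let `σ` be the reflection in the perpendicular bisector of `x` and `y`. It swaps `x` and `y`,
preserves volume, and the origin lies on the side of `x` because `‖x‖ ≤ ‖y‖`. Pairing `z` with
`σ z`, twice the difference of the two integrals is `∫ (j ‖x - z‖ - j ‖y - z‖) (h z - h (σ z))`,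
and both factors have the sign of the side of the bisector on which `z` lies.
-/

open MeasureTheory RealInnerProductSpace

section Reflection

variable {E : Type*} [NormedAddCommGroup E] [InnerProductSpace ℝ E]

noncomputable def perpBisectorReflection (x y z : E) : E :=
  y + (ℝ ∙ (y - x))ᗮ.reflection (z - x)

variable (x y : E)

@[simp]
theorem perpBisectorReflection_left : perpBisectorReflection x y x = y := by
  simp [perpBisectorReflection]

theorem perpBisectorReflection_sub (p q : E) :
    perpBisectorReflection x y p - perpBisectorReflection x y q =
      (ℝ ∙ (y - x))ᗮ.reflection (p - q) := by
  simp [perpBisectorReflection, map_sub]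

theorem isometry_perpBisectorReflection : Isometry (perpBisectorReflection x y) :=
  Isometry.of_dist_eq fun p q => by
    rw [dist_eq_norm, dist_eq_norm, perpBisectorReflection_sub, LinearIsometryEquiv.norm_map]

@[simp]
theorem perpBisectorReflection_perpBisectorReflection (z : E) :
    perpBisectorReflection x y (perpBisectorReflection x y z) = z := by
  rw [perpBisectorReflection, perpBisectorReflection, add_sub_right_comm, map_add,
    Submodule.reflection_orthogonalComplement_singleton_eq_neg, Submodule.reflection_reflection]
  abel

theorem perpBisectorReflection_right : perpBisectorReflection x y y = x := by
  simpa using perpBisectorReflection_perpBisectorReflection x y x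

theorem norm_sub_perpBisectorReflection_sq (p q : E) :
    ‖p - perpBisectorReflection x y q‖ ^ 2 - ‖p - q‖ ^ 2 =
      (‖p - y‖ ^ 2 - ‖p - x‖ ^ 2) * (‖q - y‖ ^ 2 - ‖q - x‖ ^ 2) / ‖y - x‖ ^ 2 := by
  have hR : ∀ w : E,
      (ℝ ∙ (y - x))ᗮ.reflection w = w - (2 * (⟪y - x, w⟫ / ‖y - x‖ ^ 2)) • (y - x) := by
    intro w
    rw [Submodule.reflection_orthogonal_apply, Submodule.reflection_singleton_apply]
    simp [mul_smul, two_smul]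
  have hp : p - y = (p - x) - (y - x) := by abel
  have hq : q - y = (q - x) - (y - x) := by abel
  have hpq : p - q = (p - x) - (q - x) := by abel
  have hσ : p - perpBisectorReflection x y q =
      (p - x) - (q - x) - (y - x) + (2 * (⟪y - x, q - x⟫ / ‖y - x‖ ^ 2)) • (y - x) := by
    rw [perpBisectorReflection, hR]; abel
  rw [hσ, hp, hq, hpq]
  generalize p - x = a, q - x = b, y - x = v
  rcases eq_or_ne v 0 with rfl | hv
  · simp
  simp only [norm_add_sq_real, norm_sub_sq_real, inner_sub_left, real_inner_smul_right,
    real_inner_self_eq_norm_sq, norm_smul, mul_pow, Real.norm_eq_abs, sq_abs, real_inner_comm b v]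
  field_simp
  ring

theorem norm_le_norm_perpBisectorReflection {x y z : E} (hxy : ‖x‖ ≤ ‖y‖)
    (hz : ‖x - z‖ ≤ ‖y - z‖) : ‖z‖ ≤ ‖perpBisectorReflection x y z‖ := by
  have key := norm_sub_perpBisectorReflection_sq x y 0 z
  simp only [zero_sub, norm_neg] at key
  rw [norm_sub_rev z y, norm_sub_rev z x] at key
  have hsq : ‖x‖ ^ 2 ≤ ‖y‖ ^ 2 := by gcongr
  have hzsq : ‖x - z‖ ^ 2 ≤ ‖y - z‖ ^ 2 := by gcongr
  have : 0 ≤ ‖perpBisectorReflection x y z‖ ^ 2 - ‖z‖ ^ 2 := by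
    rw [key]; apply div_nonneg (mul_nonneg (by linarith) (by linarith)) (by positivity)
  exact (pow_le_pow_iff_left₀ (norm_nonneg _) (norm_nonneg _) two_ne_zero).mp (by linarith)

theorem integrand_add_perpBisectorReflection_le {j : ℝ → ℝ} (hj : AntitoneOn j (Set.Ici 0))
    {h : E → ℝ} (hh : ∀ x y : E, ‖x‖ ≤ ‖y‖ → h y ≤ h x) {x y : E} (hxy : ‖x‖ ≤ ‖y‖) (z : E) :
    j ‖y - z‖ * h z + j ‖y - perpBisectorReflection x y z‖ * h (perpBisectorReflection x y z) ≤
      j ‖x - z‖ * h z + j ‖x - perpBisectorReflection x y z‖ * h (perpBisectorReflection x y z) := by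
  set σ := perpBisectorReflection x y
  have hdist : ∀ p q, ‖σ p - σ q‖ = ‖p - q‖ := fun p q => by
    rw [perpBisectorReflection_sub, LinearIsometryEquiv.norm_map]
  have hyσ : ‖y - σ z‖ = ‖x - z‖ := by
    simpa only [σ, perpBisectorReflection_left] using hdist x z
  have hxσ : ‖x - σ z‖ = ‖y - z‖ := by
    simpa only [σ, perpBisectorReflection_right] using hdist y z
  rw [hyσ, hxσ]
  suffices 0 ≤ (j ‖x - z‖ - j ‖y - z‖) * (h z - h (σ z)) by linarith
  rcases le_total ‖x - z‖ ‖y - z‖ with hz | hz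
  · exact mul_nonneg (sub_nonneg.2 (hj (norm_nonneg _) (norm_nonneg _) hz))
      (sub_nonneg.2 (hh _ _ (norm_le_norm_perpBisectorReflection hxy hz)))
  · have hσz : ‖σ z‖ ≤ ‖z‖ := by
      simpa [σ] using norm_le_norm_perpBisectorReflection (z := σ z) hxy (by rwa [hyσ, hxσ])
    exact mul_nonneg_of_nonpos_of_nonpos (sub_nonpos.2 (hj (norm_nonneg _) (norm_nonneg _) hz))
      (sub_nonpos.2 (hh _ _ hσz))

end Reflection

theorem integral_le_integral_of_add_comp_le {α : Type*} [MeasurableSpace α] {μ : Measure α}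
    {σ : α → α} (hσ : MeasurePreserving σ μ μ) (hσe : MeasurableEmbedding σ) {f g : α → ℝ}
    (hf : Integrable f μ) (hg : Integrable g μ) (hfg : ∀ z, f z + f (σ z) ≤ g z + g (σ z)) :
    ∫ z, f z ∂μ ≤ ∫ z, g z ∂μ := by
  have hfσ : Integrable (fun z => f (σ z)) μ := (hσ.integrable_comp_emb hσe).mpr hf
  have hgσ : Integrable (fun z => g (σ z)) μ := (hσ.integrable_comp_emb hσe).mpr hg
  have hsum : ∫ z, f z + f (σ z) ∂μ ≤ ∫ z, g z + g (σ z) ∂μ :=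
    integral_mono (hf.add hfσ) (hg.add hgσ) hfg
  rw [integral_add hf hfσ, integral_add hg hgσ, hσ.integral_comp hσe f,
    hσ.integral_comp hσe g] at hsum
  linarith

section Measure

variable {E : Type*} [NormedAddCommGroup E] [InnerProductSpace ℝ E] [FiniteDimensional ℝ E]
  [MeasurableSpace E] [BorelSpace E] (x y : E)

theorem measurePreserving_perpBisectorReflection :
    MeasurePreserving (perpBisectorReflection x y) :=
  (measurePreserving_add_left volume y).comp <|
    (LinearIsometryEquiv.measurePreserving _).comp (measurePreserving_sub_right volume x)

theorem measurableEmbedding_perpBisectorReflection :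
    MeasurableEmbedding (perpBisectorReflection x y) :=
  (isometry_perpBisectorReflection x y).isClosedEmbedding.measurableEmbedding

end Measure

theorem convolution_with_schwarz_symmetric_is_schwarz_symmetric_general
    (n : ℕ)
    (j : ℝ → ℝ)
    (hj : ∀ s t : ℝ, 0 ≤ s → s ≤ t → j t ≤ j s)
    (h : EuclideanSpace ℝ (Fin n) → ℝ)
    (hhrad : ∀ x y : EuclideanSpace ℝ (Fin n), ‖x‖ ≤ ‖y‖ → h y ≤ h x)
    (hint : ∀ x : EuclideanSpace ℝ (Fin n),
      Integrable (fun y => j ‖x - y‖ * h y) volume) :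
    ∀ x y : EuclideanSpace ℝ (Fin n), ‖x‖ ≤ ‖y‖ →
      (∫ z, j ‖y - z‖ * h z) ≤ ∫ z, j ‖x - z‖ * h z := fun x y hxy =>
  integral_le_integral_of_add_comp_le (measurePreserving_perpBisectorReflection x y)
    (measurableEmbedding_perpBisectorReflection x y) (hint y) (hint x)
    (integrand_add_perpBisectorReflection_le (fun s hs _ _ hst => hj s _ hs hst) hhrad hxy)

theorem convolution_with_schwarz_symmetric_is_schwarz_symmetric
    (n : ℕ) (hn : 1 ≤ n)
    (j : ℝ → ℝ) (hj0 : ∀ s : ℝ, 0 ≤ s → 0 ≤ j s)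
    (hj : ∀ s t : ℝ, 0 ≤ s → s ≤ t → j t ≤ j s)
    (h : EuclideanSpace ℝ (Fin n) → ℝ)
    (hh0 : ∀ x, 0 ≤ h x)
    (hhrad : ∀ x y : EuclideanSpace ℝ (Fin n), ‖x‖ ≤ ‖y‖ → h y ≤ h x)
    (hhint : Integrable h volume)
    (hint : ∀ x : EuclideanSpace ℝ (Fin n),
      Integrable (fun y => j ‖x - y‖ * h y) volume) :
    ∀ x y : EuclideanSpace ℝ (Fin n), ‖x‖ ≤ ‖y‖ →
      (∫ z, j ‖y - z‖ * h z) ≤ ∫ z, j ‖x - z‖ * h z :=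
  convolution_with_schwarz_symmetric_is_schwarz_symmetric_general n j hj h hhrad hint
end

section
/- Let σ be a reflection of ℝⁿ across a hyperplane H₀, with half-spaces H₊ (containing a distinguished point) and H₋, satisfying |x − x'| ≤ |x − σ(x')| for all x, x' ∈ H₊. Let j : [0,∞) → ℝ be nonincreasing and h : ℝⁿ → [0,∞) integrable with h(y) ≥ h(σ(y)) for all y ∈ H₊. Then the function ν(x) = ∫_{ℝⁿ} j(|x−y|) h(y) dy satisfies ν(x) ≥ ν(σ(x)) for all x ∈ H₊. -/
/-!
Put `g y = j ‖x - y‖ - j ‖σ x - y‖`. Since `σ` is an isometric involution, `g ∘ σ = -g`, and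
`g ≥ 0` on `H₊` because `j` is nonincreasing. As `σ` preserves Lebesgue measure,
`2 ∫ g h = ∫ g h + ∫ (g h) ∘ σ = ∫ g (h - h ∘ σ)`, and the last integrand is pointwise
nonnegative: on `H₊` both factors are `≥ 0`, and off `H₊` both are `≤ 0`.
-/

open MeasureTheory Function

theorem IsometryEquiv.measurePreserving_volume {V : Type*} [NormedAddCommGroup V]
    [InnerProductSpace ℝ V] [FiniteDimensional ℝ V] [MeasurableSpace V] [BorelSpace V]
    (e : V ≃ᵢ V) : MeasurePreserving e volume volume := by
  simpa only [InnerProductSpace.euclideanHausdorffMeasure_eq_volume] using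
    e.measurePreserving_euclideanHausdorffMeasure (Module.finrank ℝ V)

theorem Isometry.norm_sub_map_comm {E : Type*} [SeminormedAddCommGroup E] {σ : E → E}
    (hσ : Isometry σ) (hinv : Involutive σ) (x y : E) : ‖x - σ y‖ = ‖σ x - y‖ := by
  rw [← dist_eq_norm, ← dist_eq_norm, ← hσ.dist_eq, hinv]

section Involution

variable {α : Type*} [MeasurableSpace α] {μ : Measure α} {σ : α → α}

theorem integral_nonneg_of_add_comp_nonneg (hmp : MeasurePreserving σ μ μ)
    (hemb : MeasurableEmbedding σ) {F : α → ℝ} (hF : Integrable F μ)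
    (hFσ : ∀ y, 0 ≤ F y + F (σ y)) : 0 ≤ ∫ y, F y ∂μ := by
  have hFσint : Integrable (fun y => F (σ y)) μ := (hmp.integrable_comp_emb hemb).2 hF
  have htwice : ∫ y, F y + F (σ y) ∂μ = 2 * ∫ y, F y ∂μ := by
    rw [integral_add hF hFσint, hmp.integral_comp hemb]
    ring
  have hsum : 0 ≤ ∫ y, F y + F (σ y) ∂μ := integral_nonneg hFσ
  linarith

theorem integral_mul_nonneg_of_odd (hmp : MeasurePreserving σ μ μ)
    (hemb : MeasurableEmbedding σ) (hinv : Involutive σ) {S : Set α}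
    (hcover : ∀ y, y ∈ S ∨ σ y ∈ S) {g h : α → ℝ} (hgh : Integrable (fun y => g y * h y) μ)
    (hodd : ∀ y, g (σ y) = -g y) (hgS : ∀ y ∈ S, 0 ≤ g y) (hhS : ∀ y ∈ S, h (σ y) ≤ h y) :
    0 ≤ ∫ y, g y * h y ∂μ := by
  refine integral_nonneg_of_add_comp_nonneg hmp hemb hgh fun y => ?_
  have hsym : g y * h y + g (σ y) * h (σ y) = g y * (h y - h (σ y)) := by
    rw [hodd]
    ring
  rw [hsym]
  rcases hcover y with hy | hσy
  · exact mul_nonneg (hgS y hy) (sub_nonneg.2 (hhS y hy))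
  · have := mul_nonneg (hgS _ hσy) (sub_nonneg.2 (hhS _ hσy))
    rwa [hodd, hinv, neg_mul_comm, neg_sub] at this

end Involution

theorem polarization_inequality_for_convolution_general
    (n : ℕ)
    (σ : EuclideanSpace ℝ (Fin n) → EuclideanSpace ℝ (Fin n))
    (hσiso : Isometry σ)
    (hσinv : ∀ x, σ (σ x) = x)
    (Hp : Set (EuclideanSpace ℝ (Fin n)))
    (hcover : ∀ y, y ∈ Hp ∨ σ y ∈ Hp)
    (hgeom : ∀ x ∈ Hp, ∀ y ∈ Hp, ‖x - y‖ ≤ ‖σ x - y‖)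
    (j : ℝ → ℝ) (hj : ∀ s t : ℝ, 0 ≤ s → s ≤ t → j t ≤ j s)
    (h : EuclideanSpace ℝ (Fin n) → ℝ)
    (hhpol : ∀ y ∈ Hp, h (σ y) ≤ h y)
    (hint : ∀ x : EuclideanSpace ℝ (Fin n),
      Integrable (fun y => j ‖x - y‖ * h y) volume) :
    ∀ x ∈ Hp, (∫ y, j ‖σ x - y‖ * h y) ≤ ∫ y, j ‖x - y‖ * h y := by
  intro x hx
  let e : EuclideanSpace ℝ (Fin n) ≃ᵢ EuclideanSpace ℝ (Fin n) :=
    ⟨Involutive.toPerm σ hσinv, hσiso⟩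
  have hodd : ∀ y, j ‖x - σ y‖ - j ‖σ x - σ y‖ = -(j ‖x - y‖ - j ‖σ x - y‖) := fun y => by
    have hσσ : ‖σ x - σ y‖ = ‖x - y‖ := by simpa only [dist_eq_norm] using hσiso.dist_eq x y
    rw [hσiso.norm_sub_map_comm hσinv, hσσ]
    ring
  have hpos : ∀ y ∈ Hp, 0 ≤ j ‖x - y‖ - j ‖σ x - y‖ := fun y hy =>
    sub_nonneg.2 (hj _ _ (norm_nonneg _) (hgeom x hx y hy))
  have hdiff : Integrable (fun y => (j ‖x - y‖ - j ‖σ x - y‖) * h y) volume := by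
    simpa only [Pi.sub_def, sub_mul] using (hint x).sub (hint (σ x))
  rw [← sub_nonneg, ← integral_sub (hint x) (hint (σ x))]
  simpa only [sub_mul] using integral_mul_nonneg_of_odd e.measurePreserving_volume
    e.toHomeomorph.measurableEmbedding hσinv hcover hdiff hodd hpos hhpol

theorem polarization_inequality_for_convolution
    (n : ℕ) (hn : 1 ≤ n)
    (σ : EuclideanSpace ℝ (Fin n) → EuclideanSpace ℝ (Fin n))
    (hσiso : Isometry σ)
    (hσinv : ∀ x, σ (σ x) = x)
    (Hp : Set (EuclideanSpace ℝ (Fin n)))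
    (hHpm : MeasurableSet Hp)
    (hcover : ∀ y, y ∈ Hp ∨ σ y ∈ Hp)
    (hgeom : ∀ x ∈ Hp, ∀ y ∈ Hp, ‖x - y‖ ≤ ‖σ x - y‖)
    (j : ℝ → ℝ) (hj : ∀ s t : ℝ, 0 ≤ s → s ≤ t → j t ≤ j s)
    (h : EuclideanSpace ℝ (Fin n) → ℝ)
    (hh0 : ∀ x, 0 ≤ h x)
    (hhint : Integrable h volume)
    (hhpol : ∀ y ∈ Hp, h (σ y) ≤ h y)
    (hint : ∀ x : EuclideanSpace ℝ (Fin n),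
      Integrable (fun y => j ‖x - y‖ * h y) volume) :
    ∀ x ∈ Hp, (∫ y, j ‖σ x - y‖ * h y) ≤ ∫ y, j ‖x - y‖ * h y :=
  polarization_inequality_for_convolution_general n σ hσiso hσinv Hp hcover hgeom j hj h hhpol hint
end

section
/- Let u : ℝⁿ → [0,∞) be radial and radially nonincreasing, k, ℓ > 0, B the centered ball with μ(B) = ℓ/k, and r its radius. Then for any measurable ν : ℝⁿ → [0,k] with ∫ν ≤ ℓ, one has ∫_B u(x)(ν(x)/k − 1) dx + ∫_{ℝⁿ∖B} u(x)ν(x)/k dx ≤ u(r)·(∫ν/k − μ(B)) ≤ 0, where u(r) denotes the value of u on the boundary of B (the bathtub principle inequality). -/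
/-!
Write `c = u(r)`. On `B` we have `u ≥ c` and `ν/k - 1 ≤ 0`, so `u (ν/k - 1) ≤ c (ν/k - 1)`; off `B`
we have `u ≤ c` and `ν ≥ 0`, so `u ν/k ≤ c ν/k`. Integrating the two comparisons, the right-hand
sides add up to `c (∫ν/k - μ(B))`, which is `≤ 0` because `c ≥ 0` and `∫ν ≤ ℓ = k μ(B)`.
-/

open MeasureTheory

section Bathtub

variable {α : Type*} [MeasurableSpace α] {μ : Measure α} {s : Set α} {u ν : α → ℝ} {c k : ℝ}

theorem setIntegral_const_mul_div_sub_one_add_compl (hs : MeasurableSet s) (hμs : μ s ≠ ⊤)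
    (hν : Integrable ν μ) :
    (∫ x in s, c * (ν x / k - 1) ∂μ) + (∫ x in sᶜ, c * ν x / k ∂μ) =
      c * ((∫ x, ν x ∂μ) / k - μ.real s) := by
  have hone : IntegrableOn (fun _ => (1 : ℝ)) s μ := integrableOn_const hμs
  have hs_int : ∫ x in s, c * (ν x / k - 1) ∂μ = c * ((∫ x in s, ν x ∂μ) / k - μ.real s) := by
    rw [integral_const_mul, integral_sub (hν.integrableOn.div_const k) hone, integral_div,
      setIntegral_const, smul_eq_mul, mul_one]
  have hsc_int : ∫ x in sᶜ, c * ν x / k ∂μ = c * ((∫ x in sᶜ, ν x ∂μ) / k) := by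
    simp_rw [mul_div_assoc]
    rw [integral_const_mul, integral_div]
  rw [hs_int, hsc_int, ← integral_add_compl hs hν]
  ring

theorem setIntegral_mul_div_sub_one_add_compl_le (hs : MeasurableSet s) (hμs : μ s ≠ ⊤)
    (hk : 0 < k) (hν : ∀ x, 0 ≤ ν x ∧ ν x ≤ k) (hνint : Integrable ν μ)
    (hu_in : ∀ x ∈ s, c ≤ u x) (hu_out : ∀ x ∈ sᶜ, u x ≤ c)
    (hint_in : IntegrableOn (fun x => u x * (ν x / k - 1)) s μ)
    (hint_out : IntegrableOn (fun x => u x * ν x / k) sᶜ μ) :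
    (∫ x in s, u x * (ν x / k - 1) ∂μ) + (∫ x in sᶜ, u x * ν x / k ∂μ) ≤
      c * ((∫ x, ν x ∂μ) / k - μ.real s) := by
  have hνs : IntegrableOn ν s μ := hνint.integrableOn
  have hνsc : IntegrableOn ν sᶜ μ := hνint.integrableOn
  have hle_in : ∫ x in s, u x * (ν x / k - 1) ∂μ ≤ ∫ x in s, c * (ν x / k - 1) ∂μ := by
    refine setIntegral_mono_on hint_in
      (((hνs.div_const k).sub (integrableOn_const hμs)).const_mul c) hs fun x hx => ?_
    have : ν x / k ≤ 1 := (div_le_one hk).2 (hν x).2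
    exact mul_le_mul_of_nonpos_right (hu_in x hx) (by linarith)
  have hle_out : ∫ x in sᶜ, u x * ν x / k ∂μ ≤ ∫ x in sᶜ, c * ν x / k ∂μ := by
    refine setIntegral_mono_on hint_out ?_ hs.compl fun x hx => ?_
    · simp_rw [mul_div_assoc]
      exact (hνsc.div_const k).const_mul c
    · have := hu_out x hx
      have := (hν x).1
      gcongr
  calc _ ≤ (∫ x in s, c * (ν x / k - 1) ∂μ) + (∫ x in sᶜ, c * ν x / k ∂μ) :=
        add_le_add hle_in hle_out
    _ = _ := setIntegral_const_mul_div_sub_one_add_compl hs hμs hνint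

end Bathtub

theorem bathtub_principle_inequality_general
    (n : ℕ)
    (k ℓ : ℝ) (hk : 0 < k) (hℓ : 0 < ℓ)
    (u : EuclideanSpace ℝ (Fin n) → ℝ)
    (hu0 : ∀ x, 0 ≤ u x)
    (hurad : ∀ x y : EuclideanSpace ℝ (Fin n), ‖x‖ ≤ ‖y‖ → u y ≤ u x)
    (r : ℝ)
    (hB : volume (Metric.ball (0 : EuclideanSpace ℝ (Fin n)) r) = ENNReal.ofReal (ℓ / k))
    (x₀ : EuclideanSpace ℝ (Fin n)) (hx₀ : ‖x₀‖ = r)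
    (ν : EuclideanSpace ℝ (Fin n) → ℝ)
    (hν : ∀ x, 0 ≤ ν x ∧ ν x ≤ k)
    (hνint : Integrable ν volume)
    (hνℓ : ∫ x, ν x ≤ ℓ)
    (hint1 : IntegrableOn (fun x => u x * (ν x / k - 1))
      (Metric.ball (0 : EuclideanSpace ℝ (Fin n)) r) volume)
    (hint2 : IntegrableOn (fun x => u x * ν x / k)
      (Metric.ball (0 : EuclideanSpace ℝ (Fin n)) r)ᶜ volume) :
    (∫ x in Metric.ball (0 : EuclideanSpace ℝ (Fin n)) r, u x * (ν x / k - 1)) +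
      (∫ x in (Metric.ball (0 : EuclideanSpace ℝ (Fin n)) r)ᶜ, u x * ν x / k) ≤
        u x₀ * ((∫ x, ν x) / k - ℓ / k) ∧
    u x₀ * ((∫ x, ν x) / k - ℓ / k) ≤ 0 := by
  have hvol : volume.real (Metric.ball (0 : EuclideanSpace ℝ (Fin n)) r) = ℓ / k := by
    rw [measureReal_def, hB, ENNReal.toReal_ofReal (by positivity)]
  refine ⟨?_, mul_nonpos_of_nonneg_of_nonpos (hu0 x₀) (sub_nonpos.2 (by gcongr))⟩
  rw [← hvol]
  refine setIntegral_mul_div_sub_one_add_compl_le measurableSet_ball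
    (by rw [hB]; exact ENNReal.ofReal_ne_top) hk hν hνint (fun x hx => hurad x x₀ ?_)
    (fun x hx => hurad x₀ x ?_) hint1 hint2
  · rw [hx₀]; exact (mem_ball_zero_iff.1 hx).le
  · rw [hx₀]; exact not_lt.1 (mt mem_ball_zero_iff.2 hx)

theorem bathtub_principle_inequality
    (n : ℕ) (hn : 1 ≤ n)
    (k ℓ : ℝ) (hk : 0 < k) (hℓ : 0 < ℓ)
    (u : EuclideanSpace ℝ (Fin n) → ℝ)
    (hu0 : ∀ x, 0 ≤ u x)
    (hurad : ∀ x y : EuclideanSpace ℝ (Fin n), ‖x‖ ≤ ‖y‖ → u y ≤ u x)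
    (r : ℝ) (hr : 0 < r)
    (hB : volume (Metric.ball (0 : EuclideanSpace ℝ (Fin n)) r) = ENNReal.ofReal (ℓ / k))
    (x₀ : EuclideanSpace ℝ (Fin n)) (hx₀ : ‖x₀‖ = r)
    (ν : EuclideanSpace ℝ (Fin n) → ℝ)
    (hνm : Measurable ν)
    (hν : ∀ x, 0 ≤ ν x ∧ ν x ≤ k)
    (hνint : Integrable ν volume)
    (hνℓ : ∫ x, ν x ≤ ℓ)
    (hint1 : IntegrableOn (fun x => u x * (ν x / k - 1))
      (Metric.ball (0 : EuclideanSpace ℝ (Fin n)) r) volume)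
    (hint2 : IntegrableOn (fun x => u x * ν x / k)
      (Metric.ball (0 : EuclideanSpace ℝ (Fin n)) r)ᶜ volume) :
    (∫ x in Metric.ball (0 : EuclideanSpace ℝ (Fin n)) r, u x * (ν x / k - 1)) +
      (∫ x in (Metric.ball (0 : EuclideanSpace ℝ (Fin n)) r)ᶜ, u x * ν x / k) ≤
        u x₀ * ((∫ x, ν x) / k - ℓ / k) ∧
    u x₀ * ((∫ x, ν x) / k - ℓ / k) ≤ 0 :=
  bathtub_principle_inequality_general n k ℓ hk hℓ u hu0 hurad r hB x₀ hx₀ ν hν hνint hνℓ hint1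
    hint2
end
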